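/- arXiv:2211.13986 — 3 statements merged into one kernel-verified Lean document; each statement's English description precedes it below -/
import Mathlib

section
/- Let (E,L) be a complex of oriented matroids, let X ∈ L, and set F(X) = {X∘Y : Y ∈ L}. Then the pair (z(X), {Z restricted to z(X) : Z ∈ F(X)}) is an oriented matroid: the restricted set of sign vectors contains the all-zeros vector and satisfies (FS) and (SE). -/
open scoped Classical
open MvPolynomial

noncomputable section

abbrev SV (E : Type*) := E → SignType

variable {E : Type*}

/-- Composition of sign vectors. -/
def scomp (X Y : SV E) : SV E := fun e => if X e = 0 then Y e else X e

/-- Separator of two sign vectors. -/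
def sep (X Y : SV E) : Set E := {e | X e = -(Y e) ∧ X e ≠ 0}

/-- Zero set of a sign vector. -/
def zset (X : SV E) : Set E := {e | X e = 0}

/-- Face symmetry axiom. -/
def FSax (L : Set (SV E)) : Prop := ∀ X ∈ L, ∀ Y ∈ L, scomp X (-Y) ∈ L

/-- Strong elimination axiom. -/
def SEax (L : Set (SV E)) : Prop :=
  ∀ X ∈ L, ∀ Y ∈ L, ∀ e ∈ sep X Y,
    ∃ Z ∈ L, Z e = 0 ∧ ∀ f ∉ sep X Y, Z f = scomp X Y f

/-- Complex of oriented matroids. -/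
def IsCOM (L : Set (SV E)) : Prop := FSax L ∧ SEax L

/-- Simplicity. -/
def SimpleCOM (L : Set (SV E)) : Prop :=
  (∀ e : E, ∀ s : SignType, ∃ X ∈ L, X e = s) ∧
  (∀ e f : E, e ≠ f → ∀ s : SignType, ∃ X ∈ L, X e * X f = s)

/-- Topes: covectors of full support. -/
def Topes (L : Set (SV E)) : Set (SV E) := {X | X ∈ L ∧ ∀ e, X e ≠ 0}

/-- Componentwise order on sign vectors (0 < +, 0 < -). -/
def covLE (X Y : SV E) : Prop := ∀ e, X e = 0 ∨ X e = Y e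

def covLT (X Y : SV E) : Prop := covLE X Y ∧ X ≠ Y

def starSet (L : Set (SV E)) (X : SV E) : Set (SV E) := {T | T ∈ Topes L ∧ covLE X T}

/-- Entry of the signed Varchenko matrix. -/
def varEntry (K : Type*) [Field K] [Fintype E] (P Q : SV E) : MvPolynomial (E × Bool) K :=
  ∏ e ∈ Set.toFinset (sep P Q), X (if P e = 1 then (e, true) else (e, false))

/-- The signed Varchenko matrix, indexed by topes. -/
def varMatrix (K : Type*) [Field K] [Fintype E] (L : Set (SV E)) :
    Matrix ↥(Topes L) ↥(Topes L) (MvPolynomial (E × Bool) K) :=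
  Matrix.of fun P Q => varEntry K P.1 Q.1

/-- a(Y) = ∏_{e ∈ z(Y)} x_{e^+} x_{e^-}. -/
def aY (K : Type*) [Field K] [Fintype E] (Y : SV E) : MvPolynomial (E × Bool) K :=
  ∏ e ∈ Set.toFinset (zset Y), (X (e, true) * X (e, false))

/-- Restriction of a sign vector to a subset. -/
def restr (A : Set E) (X : SV E) : SV ↥A := fun a => X a.1

/-- `m` is the Möbius function of the relation `r` on the (finite) carrier `S`. -/
def IsMobiusOn {α : Type*} [Fintype α] (S : Set α) (r : α → α → Prop) (m : α → α → ℤ) : Prop :=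
  (∀ x ∈ S, m x x = 1) ∧
  ∀ x ∈ S, ∀ y ∈ S, r x y → x ≠ y →
    m x y = -∑ z ∈ Set.toFinset {z | z ∈ S ∧ r x z ∧ r z y ∧ z ≠ y}, m x z

/-- The carrier of the poset `T_{R,e}`: topes with `e`-coordinate `-R e`, plus
an artificial least element `none`. -/
def TReSet (L : Set (SV E)) (R : SV E) (e : E) : Set (Option (SV E)) :=
  insert none (some '' {P | P ∈ Topes L ∧ P e = -(R e)})

/-- The order of the poset `T_{R,e}` (order induced from the tope poset `T_R`,
with `none` as least element). -/
def TReRel (R : SV E) : Option (SV E) → Option (SV E) → Prop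
  | none, _ => True
  | some _, none => False
  | some P, some Q => sep R P ⊆ sep R Q

/-- `T^{Y,e}`: topes `P` such that `Y` is the maximal covector with `Y ≤ P` and `Y e = 0`. -/
def TYe (L : Set (SV E)) (Y : SV E) (e : E) : Set (SV E) :=
  {P | P ∈ Topes L ∧ covLE Y P ∧ Y e = 0 ∧
    ∀ Y' ∈ L, covLE Y' P → Y' e = 0 → covLE Y' Y}

/-- `e` is the maximal element of `S(Q,R)` w.r.t. the linear order `ord`. -/
def maxOfSep (ord : LinearOrder E) (e : E) (Q R : SV E) : Prop :=
  e ∈ sep Q R ∧ ∀ f ∈ sep Q R, ord.le f e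

/-- The matrix `M^e`. -/
def Mmat (K : Type*) [Field K] [Fintype E] (L : Set (SV E)) (ord : LinearOrder E) (e : E)
    (m : SV E → Option (SV E) → Option (SV E) → ℤ) :
    Matrix ↥(Topes L) ↥(Topes L) (MvPolynomial (E × Bool) K) :=
  Matrix.of fun Q R =>
    if Q = R then 1
    else if maxOfSep ord e Q.1 R.1 then
      (-(m R.1 none (some Q.1)) : ℤ) • varEntry K Q.1 R.1
    else 0

/-- The covector set of the cyclic oriented matroid `C_n`. -/
def cyc (E : Type*) : Set (SV E) :=
  {X | X = 0 ∨ ((∃ e, X e = 1) ∧ (∃ f, X f = -1))}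

/-- The topal fiber `ρ_{(S⁺,S⁻)}(L')`. -/
def fiber {E' : Type*} (L' : Set (SV E')) (Sp Sm : Set E') : Set (SV ↥((Sp ∪ Sm)ᶜ)) :=
  restr ((Sp ∪ Sm)ᶜ) '' {Z | Z ∈ L' ∧ (∀ e ∈ Sp, Z e = 1) ∧ (∀ e ∈ Sm, Z e = -1)}

/-!
On `z(X)` the composition `X ∘ Y` agrees with `Y`, so restricting `F(X)` to `z(X)` gives the
same set as restricting all of `L` to `z(X)`. That set contains `X|z(X) = 0`, and since
restriction commutes with composition, negation and separators, (FS) and (SE) pass from `L`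
to it.
-/

section Restriction

variable (A : Set E)

lemma restr_scomp (X Y : SV E) : restr A (scomp X Y) = scomp (restr A X) (restr A Y) := rfl

lemma restr_neg (X : SV E) : restr A (-X) = -restr A X := rfl

lemma mem_sep_restr_iff {X Y : SV E} {a : A} : a ∈ sep (restr A X) (restr A Y) ↔ a.1 ∈ sep X Y :=
  Iff.rfl

variable {A}

lemma FSax.image_restr {L : Set (SV E)} (hL : FSax L) : FSax (restr A '' L) := by
  rintro _ ⟨X, hX, rfl⟩ _ ⟨Y, hY, rfl⟩
  exact ⟨scomp X (-Y), hL X hX Y hY, by rw [restr_scomp, restr_neg]⟩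

lemma SEax.image_restr {L : Set (SV E)} (hL : SEax L) : SEax (restr A '' L) := by
  rintro _ ⟨X, hX, rfl⟩ _ ⟨Y, hY, rfl⟩ e he
  obtain ⟨Z, hZ, hZe, hZf⟩ := hL X hX Y hY e.1 ((mem_sep_restr_iff A).1 he)
  exact ⟨restr A Z, ⟨Z, hZ, rfl⟩, hZe, fun f hf => hZf f.1 (mt (mem_sep_restr_iff A).2 hf)⟩

end Restriction

lemma restr_zset_self (X : SV E) : restr (zset X) X = 0 :=
  funext fun a => a.2

lemma restr_zset_scomp (X Y : SV E) : restr (zset X) (scomp X Y) = restr (zset X) Y :=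
  funext fun a => if_pos a.2

lemma image_restr_zset_faces (L : Set (SV E)) (X : SV E) :
    restr (zset X) '' {W | ∃ Y ∈ L, W = scomp X Y} = restr (zset X) '' L := by
  ext V
  constructor
  · rintro ⟨_, ⟨Y, hY, rfl⟩, rfl⟩
    exact ⟨Y, hY, (restr_zset_scomp X Y).symm⟩
  · rintro ⟨Y, hY, rfl⟩
    exact ⟨scomp X Y, ⟨Y, hY, rfl⟩, restr_zset_scomp X Y⟩

theorem face_restriction_is_OM_general {E : Type*} (L : Set (SV E)) (hCOM : IsCOM L)
    (X : SV E) (hX : X ∈ L) :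
    (0 : SV ↥(zset X)) ∈ restr (zset X) '' {W | ∃ Y ∈ L, W = scomp X Y} ∧
    FSax (restr (zset X) '' {W | ∃ Y ∈ L, W = scomp X Y}) ∧
    SEax (restr (zset X) '' {W | ∃ Y ∈ L, W = scomp X Y}) := by
  rw [image_restr_zset_faces]
  exact ⟨⟨X, hX, restr_zset_self X⟩, hCOM.1.image_restr, hCOM.2.image_restr⟩

/-- for a covector `X` of a COM, the restriction of
`F(X) = {X ∘ Y : Y ∈ L}` to the zero set of `X` is an oriented matroid. -/
theorem face_restriction_is_OM {E : Type*} [Fintype E] (L : Set (SV E)) (hCOM : IsCOM L)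
    (X : SV E) (hX : X ∈ L) :
    (0 : SV ↥(zset X)) ∈ restr (zset X) '' {W | ∃ Y ∈ L, W = scomp X Y} ∧
    FSax (restr (zset X) '' {W | ∃ Y ∈ L, W = scomp X Y}) ∧
    SEax (restr (zset X) '' {W | ∃ Y ∈ L, W = scomp X Y}) :=
  face_restriction_is_OM_general L hCOM X hX
end
end

section
/- Let (E,L) be a complex of oriented matroids with tope set T, let X ∈ L and P ∈ T. Then Q = X∘P is the unique tope in star(X) = {T ∈ T : X ≤ T} such that for all O ∈ star(X): S(P,O) = S(P,Q) ∪ S(Q,O) and S(P,Q) ∩ S(Q,O) = ∅. -/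
open scoped Classical
open MvPolynomial

noncomputable section

variable {E : Type*}

/-!
`X ∘ P` agrees with `X` outside `z(X)` and with `P` on `z(X)`, so for `O ≥ X` the separator
`S(P,O)` splits into its part outside `z(X)`, which is `S(P, X ∘ P)`, and its part inside,
which is `S(X ∘ P, O)`. Face symmetry applied twice gives `X ∘ -(X ∘ -P) = X ∘ P ∈ L`.
Two gates `Q, Q'` satisfy `S(Q',Q) ⊆ S(P,Q) ⊆ S(P,Q')` and `S(P,Q') ∩ S(Q',Q) = ∅`, so
`S(Q',Q) = ∅` and the topes coincide.
-/

/-- `Q ∈ S` is the gate of `S` for `P`: in the separator (Hamming) metric it lies between `P`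
and every `O ∈ S`. -/
def IsGate (S : Set (SV E)) (P Q : SV E) : Prop :=
  Q ∈ S ∧ ∀ O ∈ S, sep P O = sep P Q ∪ sep Q O ∧ sep P Q ∩ sep Q O = ∅

theorem scomp_neg_scomp (X Y : SV E) : scomp X (-scomp X Y) = scomp X (-Y) := by
  funext e
  by_cases h : X e = 0 <;> simp [scomp, h]

theorem FSax.scomp_mem {L : Set (SV E)} (hFS : FSax L) {X Y : SV E} (hX : X ∈ L)
    (hY : Y ∈ L) : scomp X Y ∈ L := by
  simpa [scomp_neg_scomp] using hFS X hX _ (hFS X hX Y hY)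

theorem covLE_scomp (X Y : SV E) : covLE X (scomp X Y) := fun e => by
  by_cases h : X e = 0 <;> simp [scomp, h]

theorem scomp_ne_zero {Y : SV E} (hY : ∀ e, Y e ≠ 0) (X : SV E) (e : E) : scomp X Y e ≠ 0 := by
  by_cases h : X e = 0 <;> simp [scomp, h, hY e]

theorem scomp_mem_starSet {L : Set (SV E)} (hFS : FSax L) {X P : SV E} (hX : X ∈ L)
    (hP : P ∈ Topes L) : scomp X P ∈ starSet L X :=
  ⟨⟨hFS.scomp_mem hX hP.1, scomp_ne_zero hP.2 X⟩, covLE_scomp X P⟩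

theorem sep_scomp_right (P X : SV E) : sep P (scomp X P) = sep P X := by
  ext e
  by_cases h : X e = 0 <;> simp [sep, scomp, h]

theorem sep_scomp_left {X O : SV E} (hXO : covLE X O) (P : SV E) :
    sep (scomp X P) O = sep P O ∩ zset X := by
  ext e
  by_cases hX0 : X e = 0
  · simp [sep, scomp, zset, hX0]
  · have hO : X e = O e := (hXO e).resolve_left hX0
    simp [sep, scomp, zset, hX0, ← hO]

theorem sep_diff_zset {X O : SV E} (hXO : covLE X O) (P : SV E) :
    sep P O \ zset X = sep P X := by
  ext e
  by_cases hX0 : X e = 0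
  · simp [sep, zset, hX0]
  · have hO : X e = O e := (hXO e).resolve_left hX0
    simp [sep, zset, hX0, ← hO]

theorem isGate_scomp_starSet {L : Set (SV E)} (hFS : FSax L) {X P : SV E} (hX : X ∈ L)
    (hP : P ∈ Topes L) : IsGate (starSet L X) P (scomp X P) := by
  refine ⟨scomp_mem_starSet hFS hX hP, fun O hO => ?_⟩
  rw [sep_scomp_right, sep_scomp_left hO.2, ← sep_diff_zset hO.2]
  exact ⟨(Set.sdiff_union_inter _ _).symm, (Set.disjoint_sdiff_inter).eq_bot⟩

theorem eq_of_sep_eq_empty {P Q : SV E} (hP : ∀ e, P e ≠ 0) (hQ : ∀ e, Q e ≠ 0)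
    (h : sep P Q = ∅) : P = Q := by
  have sign_eq : ∀ s t : SignType, s ≠ 0 → t ≠ 0 → ¬(s = -t ∧ s ≠ 0) → s = t := by decide
  funext e
  exact sign_eq _ _ (hP e) (hQ e) (show e ∉ sep P Q from h ▸ Set.notMem_empty e)

theorem IsGate.unique {S : Set (SV E)} (hS : ∀ T ∈ S, ∀ e, T e ≠ 0) {P Q Q' : SV E}
    (hQ : IsGate S P Q) (hQ' : IsGate S P Q') : Q = Q' := by
  have hPQ' := (hQ.2 Q' hQ'.1).1
  obtain ⟨hPQ, hdisj⟩ := hQ'.2 Q hQ.1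
  have hsub : sep Q' Q ⊆ sep P Q' :=
    calc sep Q' Q ⊆ sep P Q := hPQ ▸ Set.subset_union_right
      _ ⊆ sep P Q' := hPQ' ▸ Set.subset_union_left
  refine (eq_of_sep_eq_empty (hS Q' hQ'.1) (hS Q hQ.1) ?_).symm
  exact (Set.inter_eq_right.mpr hsub).symm.trans hdisj

theorem gate_of_star_general {E : Type*} (L : Set (SV E)) (hCOM : IsCOM L)
    (X : SV E) (hX : X ∈ L) (P : SV E) (hP : P ∈ Topes L) :
    scomp X P ∈ starSet L X ∧
    (∀ O ∈ starSet L X,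
      sep P O = sep P (scomp X P) ∪ sep (scomp X P) O ∧
      sep P (scomp X P) ∩ sep (scomp X P) O = ∅) ∧
    (∀ Q ∈ starSet L X,
      (∀ O ∈ starSet L X, sep P O = sep P Q ∪ sep Q O ∧ sep P Q ∩ sep Q O = ∅) →
      Q = scomp X P) := by
  have hgate := isGate_scomp_starSet hCOM.1 hX hP
  refine ⟨hgate.1, hgate.2, fun Q hQ hQgate => ?_⟩
  exact IsGate.unique (fun T hT => hT.1.2) ⟨hQ, hQgate⟩ hgate

/-- `X ∘ P` is the unique gate of `star(X)` for the tope `P`. -/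
theorem gate_of_star {E : Type*} [Fintype E] (L : Set (SV E)) (hCOM : IsCOM L)
    (X : SV E) (hX : X ∈ L) (P : SV E) (hP : P ∈ Topes L) :
    scomp X P ∈ starSet L X ∧
    (∀ O ∈ starSet L X,
      sep P O = sep P (scomp X P) ∪ sep (scomp X P) O ∧
      sep P (scomp X P) ∩ sep (scomp X P) O = ∅) ∧
    (∀ Q ∈ starSet L X,
      (∀ O ∈ starSet L X, sep P O = sep P Q ∪ sep Q O ∧ sep P Q ∩ sep Q O = ∅) →
      Q = scomp X P) :=
  gate_of_star_general L hCOM X hX P hP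

end
end

section
/- Let P be a finite poset and let I(P) be the set of order ideals (down-closed subsets) of P. Let V be the I(P)×I(P) matrix over K[x_p : p ∈ P] with V_{I,I'} = ∏_{p ∈ I Δ I'} x_p, where I Δ I' is the symmetric difference. Then det(V) = ∏_{p ∈ P} (1 - x_p^2)^{m_p}, where m_p is the number of antichains of P containing p. -/
open scoped Classical
open MvPolynomial

noncomputable section

/-!
Induct on `P`, removing a maximal element `p`. The ideals avoiding `p` are the ideals of
`P \ {p}`; those containing `p` are the sets `J ∪ ↓p` with `J` an ideal of the subposet of elements
not below `p`, and erasing `p` maps them to ideals avoiding `p`. Listing the ideals in these two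
blocks, the Varchenko matrix becomes `[[A, x_p A(·,ι)], [x_p A(ι,·), A(ι,ι)]]` with `ι = erase p`,
and one block column operation gives `det A · (1 - x_p²)^N · det A(ι,ι)`, where `N` is the number
of ideals containing `p`. Antichains split in the same way (`p ∉ A`, or `A = insert p B` with `B` an
antichain of elements incomparable to `p`), which gives `N = m_p` and the recursion for the other
exponents. The induction runs over the finite subsets `S` of `P` with the induced order, so that
everything stays inside one ambient type.
-/

open Finset

theorem Finset.erase_symmDiff {α : Type*} [DecidableEq α] (s t : Finset α) (a : α) :
    (symmDiff s t).erase a = symmDiff (s.erase a) (t.erase a) := by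
  ext b
  by_cases hb : b = a <;> simp [mem_symmDiff, hb]

theorem Finset.symmDiff_union_union_of_disjoint {α : Type*} [DecidableEq α] {s t u : Finset α}
    (hs : Disjoint s u) (ht : Disjoint t u) : symmDiff (s ∪ u) (t ∪ u) = symmDiff s t := by
  ext a
  by_cases ha : a ∈ u
  · simp [mem_symmDiff, ha, disjoint_right.1 hs ha, disjoint_right.1 ht ha]
  · simp [mem_symmDiff, ha]

namespace Matrix

variable {m n R : Type*} [Fintype m] [Fintype n] [DecidableEq m] [DecidableEq n] [CommRing R]

theorem det_fromBlocks_smul_submatrix (A : Matrix m m R) (f : n → m) (t : R) :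
    (fromBlocks A (t • A.submatrix id f) (t • A.submatrix f id) (A.submatrix f f)).det =
      A.det * (1 - t ^ 2) ^ Fintype.card n * (A.submatrix f f).det := by
  set E : Matrix (m ⊕ n) (m ⊕ n) R := fromBlocks 1 (-t • (1 : Matrix m m R).submatrix id f) 0 1
  have hE : E.det = 1 := by simp [E]
  have hmul : fromBlocks A (t • A.submatrix id f) (t • A.submatrix f id) (A.submatrix f f) * E =
      fromBlocks A 0 (t • A.submatrix f id) ((1 - t ^ 2) • A.submatrix f f) := by
    have hA : A * (1 : Matrix m m R).submatrix id f = A.submatrix id f := by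
      ext i j; simp [mul_apply, one_apply]
    have hA' : A.submatrix f id * (1 : Matrix m m R).submatrix id f = A.submatrix f f := by
      ext i j; simp [mul_apply, one_apply]
    simp only [E, fromBlocks_multiply, Matrix.mul_one, Matrix.mul_zero, add_zero,
      Matrix.mul_smul, Matrix.smul_mul, hA, hA']
    congr 1
    · simp
    · rw [sub_smul, one_smul, pow_two, mul_smul, neg_smul]; abel
  have h := congrArg det hmul
  rw [det_mul, hE, mul_one] at h
  rw [h, det_fromBlocks_zero₁₂, det_smul, mul_assoc]

end Matrix

section Varchenko

variable {α R : Type*} [DecidableEq α] [CommRing R]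

def varchenkoMatrix (x : α → R) (𝓕 : Finset (Finset α)) : Matrix 𝓕 𝓕 R :=
  Matrix.of fun I J => ∏ a ∈ symmDiff (I : Finset α) J, x a

theorem prod_symmDiff_eq_mul_prod_symmDiff_erase (x : α → R) (s t : Finset α) (a : α) :
    ∏ b ∈ symmDiff s t, x b =
      (if a ∈ symmDiff s t then x a else 1) * ∏ b ∈ symmDiff (s.erase a) (t.erase a), x b := by
  rw [← Finset.erase_symmDiff]
  split_ifs with h
  · exact (mul_prod_erase _ _ h).symm
  · rw [one_mul, erase_eq_of_notMem h]

theorem det_varchenkoMatrix_image (x : α → R) {𝓕 : Finset (Finset α)} {f : Finset α → Finset α}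
    (hf : ∀ I ∈ 𝓕, ∀ J ∈ 𝓕, symmDiff (f I) (f J) = symmDiff I J) :
    (varchenkoMatrix x (𝓕.image f)).det = (varchenkoMatrix x 𝓕).det := by
  have hinj : Set.InjOn f 𝓕 := fun I hI J hJ h =>
    symmDiff_eq_bot.1 (by rw [← hf I hI J hJ, h, symmDiff_self])
  let e : 𝓕 ≃ 𝓕.image f := Equiv.ofBijective (fun I => ⟨f I, mem_image_of_mem f I.2⟩)
    ⟨fun I J h => Subtype.ext (hinj I.2 J.2 (congrArg Subtype.val h)), fun ⟨K, hK⟩ => by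
      obtain ⟨I, hI, rfl⟩ := mem_image.1 hK
      exact ⟨⟨I, hI⟩, rfl⟩⟩
  rw [← Matrix.det_submatrix_equiv_self e]
  congr 1
  ext I J
  exact congrArg (∏ a ∈ ·, x a) (hf I I.2 J J.2)

theorem det_varchenkoMatrix_eq_mul_of_erase_mem (x : α → R) {𝓕 : Finset (Finset α)} {p : α}
    (h𝓕 : ∀ I ∈ 𝓕, I.erase p ∈ 𝓕) :
    (varchenkoMatrix x 𝓕).det =
      (varchenkoMatrix x (𝓕.filter (p ∉ ·))).det * (1 - x p ^ 2) ^ #(𝓕.filter (p ∈ ·)) *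
        (varchenkoMatrix x (𝓕.filter (p ∈ ·))).det := by
  set A := varchenkoMatrix x (𝓕.filter (p ∉ ·))
  let g : 𝓕.filter (p ∈ ·) → 𝓕.filter (p ∉ ·) := fun I =>
    ⟨I.1.erase p, mem_filter.2 ⟨h𝓕 _ (mem_filter.1 I.2).1, notMem_erase p _⟩⟩
  let e : 𝓕.filter (p ∉ ·) ⊕ 𝓕.filter (p ∈ ·) ≃ 𝓕 :=
    (Equiv.Finset.union _ _ (disjoint_filter_filter_not _ _ _).symm).trans
      (Equiv.subtypeEquivRight fun I => by rw [union_comm, filter_union_filter_not_eq])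
  have hblocks : (varchenkoMatrix x 𝓕).submatrix e e =
      .fromBlocks A (x p • A.submatrix id g) (x p • A.submatrix g id) (A.submatrix g g) := by
    have he₀ : ∀ I, (e (.inl I) : Finset α) = I := fun _ => rfl
    have he₁ : ∀ I, (e (.inr I) : Finset α) = I := fun _ => rfl
    ext (I | I) (J | J)
    · rfl
    all_goals
      have hI := (mem_filter.1 I.2).2
      have hJ := (mem_filter.1 J.2).2
      simp only [A, g, varchenkoMatrix, Matrix.submatrix_apply, Matrix.fromBlocks_apply₁₂,
        Matrix.fromBlocks_apply₂₁, Matrix.fromBlocks_apply₂₂, Matrix.smul_apply, Matrix.of_apply]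
      rw [prod_symmDiff_eq_mul_prod_symmDiff_erase x _ _ p]
      simp [he₀, he₁, mem_symmDiff, hI, hJ, erase_eq_of_notMem]
  have hD : A.submatrix g g = varchenkoMatrix x (𝓕.filter (p ∈ ·)) := by
    ext I J
    have hI := (mem_filter.1 I.2).2
    have hJ := (mem_filter.1 J.2).2
    simp only [A, g, varchenkoMatrix, Matrix.submatrix_apply, Matrix.of_apply]
    rw [prod_symmDiff_eq_mul_prod_symmDiff_erase x I J p]
    simp [mem_symmDiff, hI, hJ]
  rw [← Matrix.det_submatrix_equiv_self e, hblocks, Matrix.det_fromBlocks_smul_submatrix, hD,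
    Fintype.card_coe]

end Varchenko

section Poset

variable {P : Type*} [PartialOrder P]

def idealsIn (S : Finset P) : Finset (Finset P) :=
  S.powerset.filter fun I => ∀ a ∈ I, ∀ b ∈ S, b ≤ a → b ∈ I

def antichainsIn (S : Finset P) : Finset (Finset P) :=
  S.powerset.filter fun A => IsAntichain (· ≤ ·) (A : Set P)

theorem subset_of_mem_idealsIn {S I : Finset P} (hI : I ∈ idealsIn S) : I ⊆ S :=
  mem_powerset.1 (mem_filter.1 hI).1

theorem Finset.induction_on_maximal {motive : Finset P → Prop} (S : Finset P)
    (empty : motive ∅)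
    (step : ∀ S p, Maximal (· ∈ S) p → motive (S.erase p) → motive (S.filter (¬ · ≤ p)) →
      motive S) :
    motive S := by
  induction S using Finset.strongInduction with
  | H S ih =>
    rcases S.eq_empty_or_nonempty with rfl | hS
    · exact empty
    obtain ⟨p, hp⟩ := S.exists_maximal hS
    exact step S p hp (ih _ (erase_ssubset hp.1))
      (ih _ (filter_ssubset.2 ⟨p, hp.1, not_not.2 le_rfl⟩))

variable {S : Finset P} {p : P}

theorem erase_mem_idealsIn (hp : Maximal (· ∈ S) p) {I : Finset P} (hI : I ∈ idealsIn S) :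
    I.erase p ∈ idealsIn S := by
  simp only [idealsIn, mem_filter, mem_powerset] at hI ⊢
  refine ⟨(erase_subset _ _).trans hI.1, fun a ha b hb hba =>
    mem_erase.2 ⟨?_, hI.2 a (mem_of_mem_erase ha) b hb hba⟩⟩
  rintro rfl
  exact ne_of_mem_erase ha (hp.eq_of_ge (hI.1 (mem_of_mem_erase ha)) hba)

theorem filter_notMem_idealsIn (hp : Maximal (· ∈ S) p) :
    (idealsIn S).filter (p ∉ ·) = idealsIn (S.erase p) := by
  ext I
  simp only [idealsIn, mem_filter, mem_powerset, subset_erase, mem_erase]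
  constructor
  · rintro ⟨⟨hIS, hI⟩, hpI⟩
    exact ⟨⟨hIS, hpI⟩, fun a ha b hb hba => hI a ha b hb.2 hba⟩
  · rintro ⟨⟨hIS, hpI⟩, hI⟩
    refine ⟨⟨hIS, fun a ha b hb hba => hI a ha b ⟨?_, hb⟩ hba⟩, hpI⟩
    rintro rfl
    exact hpI (hp.eq_of_ge (hIS ha) hba ▸ ha)

theorem filter_mem_idealsIn (hp : p ∈ S) :
    (idealsIn S).filter (p ∈ ·) =
      (idealsIn (S.filter (¬ · ≤ p))).image (· ∪ S.filter (· ≤ p)) := by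
  ext I
  simp only [idealsIn, mem_filter, mem_powerset, mem_image]
  constructor
  · rintro ⟨⟨hIS, hI⟩, hpI⟩
    refine ⟨I.filter (¬ · ≤ p), ⟨filter_subset_filter _ hIS, fun a ha b hb hba => ?_⟩, ?_⟩
    · simp only [mem_filter] at ha hb ⊢
      exact ⟨hI a ha.1 b hb.1 hba, hb.2⟩
    · ext r
      simp only [mem_union, mem_filter]
      by_cases hr : r ≤ p
      · simp only [hr, not_true_eq_false, and_false, and_true, false_or]
        exact ⟨fun hrS => hI p hpI r hrS hr, fun hrI => hIS hrI⟩
      · simp [hr]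
  · rintro ⟨J, ⟨hJS, hJ⟩, rfl⟩
    refine ⟨⟨union_subset (hJS.trans (filter_subset _ _)) (filter_subset _ _),
      fun a ha b hb hba => ?_⟩, mem_union_right _ (mem_filter.2 ⟨hp, le_rfl⟩)⟩
    rw [mem_union, mem_filter] at ha ⊢
    by_cases hbp : b ≤ p
    · exact Or.inr ⟨hb, hbp⟩
    · rcases ha with ha | ha
      · exact Or.inl (hJ a ha b ⟨hb, hbp⟩ hba)
      · exact absurd (hba.trans ha.2) hbp

theorem disjoint_of_mem_idealsIn_filter_not_le {J : Finset P}
    (hJ : J ∈ idealsIn (S.filter (¬ · ≤ p))) : Disjoint J (S.filter (· ≤ p)) :=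
  (disjoint_filter_filter_not S S (· ≤ p)).symm.mono_left (subset_of_mem_idealsIn hJ)

theorem card_filter_mem_idealsIn (hp : p ∈ S) :
    #((idealsIn S).filter (p ∈ ·)) = #(idealsIn (S.filter (¬ · ≤ p))) := by
  rw [filter_mem_idealsIn hp, card_image_of_injOn]
  intro J hJ J' hJ' h
  rw [← union_sdiff_cancel_right (disjoint_of_mem_idealsIn_filter_not_le hJ),
    ← union_sdiff_cancel_right (disjoint_of_mem_idealsIn_filter_not_le hJ')]
  exact congrArg (· \ _) h

theorem filter_notMem_antichainsIn :
    (antichainsIn S).filter (p ∉ ·) = antichainsIn (S.erase p) := by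
  ext A
  simp only [antichainsIn, mem_filter, mem_powerset, subset_erase]
  tauto

theorem filter_mem_antichainsIn (hp : Maximal (· ∈ S) p) :
    (antichainsIn S).filter (p ∈ ·) = (antichainsIn (S.filter (¬ · ≤ p))).image (insert p) := by
  ext A
  simp only [antichainsIn, mem_filter, mem_powerset, mem_image]
  constructor
  · rintro ⟨⟨hAS, hA⟩, hpA⟩
    refine ⟨A.erase p, ⟨fun b hb => mem_filter.2 ⟨hAS (mem_of_mem_erase hb), ?_⟩,
      hA.subset (by simp)⟩, insert_erase hpA⟩
    exact hA (mem_of_mem_erase hb) hpA (ne_of_mem_erase hb)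
  · rintro ⟨B, ⟨hBQ, hB⟩, rfl⟩
    refine ⟨⟨insert_subset hp.1 (hBQ.trans (filter_subset _ _)), ?_⟩, mem_insert_self _ _⟩
    rw [coe_insert, isAntichain_insert]
    exact ⟨hB, fun b hb hpb =>
      ⟨fun hle => hpb (hp.eq_of_le (mem_filter.1 (hBQ hb)).1 hle), (mem_filter.1 (hBQ hb)).2⟩⟩

theorem notMem_of_mem_antichainsIn_filter_not_le {B : Finset P}
    (hB : B ∈ antichainsIn (S.filter (¬ · ≤ p))) : p ∉ B := fun hpB =>
  (mem_filter.1 (mem_powerset.1 (mem_filter.1 hB).1 hpB)).2 le_rfl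

theorem injOn_insert_antichainsIn_filter_not_le :
    Set.InjOn (insert p) (antichainsIn (S.filter (¬ · ≤ p)) : Set (Finset P)) := by
  intro B hB B' hB' h
  rw [← erase_insert (notMem_of_mem_antichainsIn_filter_not_le hB), h,
    erase_insert (notMem_of_mem_antichainsIn_filter_not_le hB')]

theorem card_idealsIn_eq_card_antichainsIn (S : Finset P) : #(idealsIn S) = #(antichainsIn S) := by
  induction S using Finset.induction_on_maximal with
  | empty => simp [idealsIn, antichainsIn, filter_singleton]
  | step S p hp ih₀ ih₁ =>
    rw [← card_filter_add_card_filter_not (s := idealsIn S) (p ∈ ·),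
      ← card_filter_add_card_filter_not (s := antichainsIn S) (p ∈ ·),
      card_filter_mem_idealsIn hp.1, filter_notMem_idealsIn hp, filter_notMem_antichainsIn,
      filter_mem_antichainsIn hp, card_image_of_injOn injOn_insert_antichainsIn_filter_not_le,
      ih₀, ih₁]

theorem card_filter_mem_antichainsIn (hp : Maximal (· ∈ S) p) (q : P) :
    #((antichainsIn S).filter (q ∈ ·)) =
      #((antichainsIn (S.erase p)).filter (q ∈ ·)) +
        #((antichainsIn (S.filter (¬ · ≤ p))).filter (q ∈ ·)) +
          if q = p then #(antichainsIn (S.filter (¬ · ≤ p))) else 0 := by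
  rw [← card_filter_add_card_filter_not (s := (antichainsIn S).filter (q ∈ ·)) (p ∈ ·),
    filter_comm, filter_comm _ (fun A => ¬ p ∈ A), filter_notMem_antichainsIn,
    filter_mem_antichainsIn hp, filter_image,
    card_image_of_injOn
      (injOn_insert_antichainsIn_filter_not_le.mono (coe_subset.2 (filter_subset _ _)))]
  split_ifs with hq
  · subst hq
    rw [filter_true_of_mem fun B _ => mem_insert_self q B,
      filter_false_of_mem fun B hB => notMem_of_mem_antichainsIn_filter_not_le hB, card_empty]
    ring
  · simp only [mem_insert, hq, false_or]
    ring

theorem det_varchenkoMatrix_idealsIn {R : Type*} [CommRing R] [Fintype P] (x : P → R)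
    (S : Finset P) :
    (varchenkoMatrix x (idealsIn S)).det =
      ∏ q, (1 - x q ^ 2) ^ #((antichainsIn S).filter (q ∈ ·)) := by
  induction S using Finset.induction_on_maximal with
  | empty =>
    have hI : ∀ I : idealsIn (∅ : Finset P), (I : Finset P) = ∅ := fun I =>
      subset_empty.1 (subset_of_mem_idealsIn I.2)
    have h1 : varchenkoMatrix x (idealsIn ∅) = 1 := by
      ext I J
      rw [Matrix.one_apply, if_pos (Subtype.ext ((hI I).trans (hI J).symm))]
      simp [varchenkoMatrix, hI]
    simp [h1, antichainsIn, filter_singleton]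
  | step S p hp ih₀ ih₁ =>
    rw [det_varchenkoMatrix_eq_mul_of_erase_mem x fun I hI => erase_mem_idealsIn hp hI,
      filter_notMem_idealsIn hp, card_filter_mem_idealsIn hp.1, filter_mem_idealsIn hp.1,
      det_varchenkoMatrix_image x fun J hJ J' hJ' => symmDiff_union_union_of_disjoint
        (disjoint_of_mem_idealsIn_filter_not_le hJ) (disjoint_of_mem_idealsIn_filter_not_le hJ'),
      ih₀, ih₁, card_idealsIn_eq_card_antichainsIn]
    simp only [card_filter_mem_antichainsIn hp, pow_add, prod_mul_distrib, pow_ite, pow_zero,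
      prod_ite_eq', mem_univ, if_true]
    ring

end Poset

/-- the Varchenko determinant of the distributive lattice of order
ideals of a finite poset `P`: the matrix indexed by order ideals whose `(I,I')`
entry is `∏_{p ∈ I Δ I'} x_p` has determinant `∏_{p ∈ P} (1 - x_p²)^{m_p}`,
where `m_p` is the number of antichains of `P` containing `p`. -/
theorem varchenko_det_ideals {P : Type*} [Fintype P] [PartialOrder P]
    (K : Type*) [Field K] :
    (Matrix.of fun I I' : {I : Finset P // ∀ ⦃p q : P⦄, p ∈ I → q ≤ p → q ∈ I} =>
        ∏ p ∈ symmDiff I.1 I'.1, (X p : MvPolynomial P K)).det =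
      ∏ p : P, (1 - (X p : MvPolynomial P K) ^ 2) ^
        (Finset.univ.filter fun A : Finset P =>
          IsAntichain (· ≤ ·) (A : Set P) ∧ p ∈ A).card := by
  let e : {I : Finset P // ∀ ⦃p q : P⦄, p ∈ I → q ≤ p → q ∈ I} ≃ idealsIn (univ : Finset P) :=
    Equiv.subtypeEquivRight fun I => by
      simp only [idealsIn, mem_filter, mem_powerset, subset_univ, mem_univ, true_and, true_implies]
      exact ⟨fun h a ha b hba => h ha hba, fun h _ _ ha hba => h _ ha _ hba⟩
  have hA : ∀ p : P, univ.filter (fun A : Finset P => IsAntichain (· ≤ ·) (A : Set P) ∧ p ∈ A) =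
      (antichainsIn univ).filter (p ∈ ·) := fun p => by simp [antichainsIn, filter_filter]
  calc _ = ((varchenkoMatrix X (idealsIn univ)).submatrix e e).det := rfl
    _ = _ := by rw [Matrix.det_submatrix_equiv_self, det_varchenkoMatrix_idealsIn]; simp_rw [hA]

end
end
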